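/- arXiv:1907.07396 — 4 statements merged into one kernel-verified Lean document; each statement's English description precedes it below -/
import Mathlib

section
/- For a prime power p and any 1 ≤ k ≤ p-1, the family of affine polynomials f_i·x + f_j over the finite field F_p, evaluated at k fixed distinct nonzero field elements, yields an Euler square of index (p,k): i.e., the p² resulting k-tuples satisfy (a) two tuples from the same row (same leading coefficient, different constants) agree in no coordinate, (b) two tuples from the same column (different leading coefficients, same constant) agree in no coordinate, and (c) any two tuples from different rows and different columns agree in at most one coordinate. -/
/-! Two affine functions `x ↦ a * x + b` and `x ↦ a' * x + b'` with `a ≠ a'` agree only at the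
single point `x = (b' - b) / (a - a')`; since the evaluation points are distinct, two tuples from
different rows agree in at most one coordinate. -/

theorem eq_of_mul_add_eq_mul_add {R : Type*} [CommRing R] [NoZeroDivisors R]
    {a a' b b' x y : R} (ha : a ≠ a') (hx : a * x + b = a' * x + b')
    (hy : a * y + b = a' * y + b') : x = y := by
  have hx' : (a - a') * x = b' - b := by linear_combination hx
  have hy' : (a - a') * y = b' - b := by linear_combination hy
  exact mul_left_cancel₀ (sub_ne_zero_of_ne ha) (hx'.trans hy'.symm)

theorem card_filter_mul_add_eq_mul_add_le_one {ι R : Type*} [Fintype ι] [CommRing R]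
    [NoZeroDivisors R] [DecidableEq R] {S : ι → R} (hS : Function.Injective S) {a a' : R}
    (ha : a ≠ a') (b b' : R) :
    (Finset.univ.filter (fun i => a * S i + b = a' * S i + b')).card ≤ 1 := by
  refine Finset.card_le_one.mpr fun i hi j hj => hS ?_
  rw [Finset.mem_filter] at hi hj
  exact eq_of_mul_add_eq_mul_add ha hi.2 hj.2

theorem euler_square_from_affine_polynomials_general
    (k : ℕ)
    (F : Type*) [Field F] [DecidableEq F]
    (S : Fin k → F) (hinj : Function.Injective S) (hS0 : ∀ i, S i ≠ 0) :
    -- (a) same row (same leading coefficient, different constants): no agreement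
    (∀ (a b b' : F), b ≠ b' → ∀ i, a * S i + b ≠ a * S i + b') ∧
    -- (b) same column (different leading coefficients, same constant): no agreement
    (∀ (a a' b : F), a ≠ a' → ∀ i, a * S i + b ≠ a' * S i + b) ∧
    -- (c) different rows and columns: at most one agreement
    (∀ (a a' b b' : F), a ≠ a' → b ≠ b' →
      (Finset.univ.filter (fun i : Fin k => a * S i + b = a' * S i + b')).card ≤ 1) :=
  ⟨fun _ _ _ hb _ h => hb (add_left_cancel h),
    fun _ _ _ ha i h => ha (mul_right_cancel₀ (hS0 i) (add_right_cancel h)),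
    fun _ _ b b' ha _ => card_filter_mul_add_eq_mul_add_le_one hinj ha b b'⟩

/-- Affine polynomials over a finite field of prime power order `p`,
evaluated at `k` fixed distinct nonzero points, yield an Euler square of index `(p,k)`. -/
theorem euler_square_from_affine_polynomials
    (p k : ℕ) (hp : IsPrimePow p)
    (F : Type*) [Field F] [Fintype F] [DecidableEq F] (hF : Fintype.card F = p)
    (hk1 : 1 ≤ k) (hk2 : k ≤ p - 1)
    (S : Fin k → F) (hinj : Function.Injective S) (hS0 : ∀ i, S i ≠ 0) :
    -- (a) same row (same leading coefficient, different constants): no agreement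
    (∀ (a b b' : F), b ≠ b' → ∀ i, a * S i + b ≠ a * S i + b') ∧
    -- (b) same column (different leading coefficients, same constant): no agreement
    (∀ (a a' b : F), a ≠ a' → ∀ i, a * S i + b ≠ a' * S i + b) ∧
    -- (c) different rows and columns: at most one agreement
    (∀ (a a' b b' : F), a ≠ a' → b ≠ b' →
      (Finset.univ.filter (fun i : Fin k => a * S i + b = a' * S i + b')).card ≤ 1) :=
  euler_square_from_affine_polynomials_general k F S hinj hS0
end

section
/- Let Φ be an m × M real matrix with unit-norm columns and coherence μ. Then for every k-sparse unit vector x, (1 - (k-1)μ)‖x‖² ≤ ‖Φx‖² ≤ (1 + (k-1)μ)‖x‖²; i.e., Φ satisfies the restricted isometry property of order k with constant δ_k = (k-1)μ. -/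
/-!
Expanding `‖Φx‖²` gives the quadratic form of the Gram matrix `ΦᵀΦ`, whose diagonal is `1`
and whose off-diagonal entries are bounded by `μ`. Hence `‖Φx‖²` differs from `‖x‖²` by at
most `μ ((∑ |xⱼ|)² - ‖x‖²)`, and Cauchy–Schwarz on the support of `x` gives
`(∑ |xⱼ|)² ≤ k ‖x‖²`.
-/

open Finset Matrix

section
variable {ι κ : Type*} [Fintype ι] [Fintype κ]

theorem sq_sum_abs_le_card_support_mul_sum_sq (x : ι → ℝ) :
    (∑ j, |x j|) ^ 2 ≤ #{j | x j ≠ 0} * ∑ j, x j ^ 2 := by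
  rw [← sum_filter_of_ne (f := fun j => |x j|) fun j _ h => abs_ne_zero.mp h,
    ← sum_filter_of_ne (f := fun j => x j ^ 2) fun j _ => pow_ne_zero_iff two_ne_zero |>.mp]
  simpa only [sq_abs] using sq_sum_le_card_mul_sum_sq (s := {j | x j ≠ 0}) (f := fun j => |x j|)

theorem sum_mulVec_sq_eq_sum_gram (Φ : Matrix κ ι ℝ) (x : ι → ℝ) :
    ∑ i, (Φ *ᵥ x) i ^ 2 = ∑ j, ∑ j', x j * x j' * (Φᵀ * Φ) j j' := by
  simp only [mulVec, dotProduct, sq, sum_mul_sum]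
  simp only [mul_apply, transpose_apply, mul_sum]
  rw [sum_comm]
  refine sum_congr rfl fun j _ => ?_
  rw [sum_comm]
  exact sum_congr rfl fun j' _ => sum_congr rfl fun i _ => by ring

theorem abs_quadForm_sub_sum_sq_le [DecidableEq ι] (G : Matrix ι ι ℝ) {μ : ℝ}
    (hdiag : ∀ j, G j j = 1) (hoff : ∀ j j', j ≠ j' → |G j j'| ≤ μ) (x : ι → ℝ) :
    |∑ j, ∑ j', x j * x j' * G j j' - ∑ j, x j ^ 2| ≤ μ * ((∑ j, |x j|) ^ 2 - ∑ j, x j ^ 2) := by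
  have hentry :
      ∀ j j', |G j j' - (1 : Matrix ι ι ℝ) j j'| ≤ μ * (1 - (1 : Matrix ι ι ℝ) j j') := by
    intro j j'
    rcases eq_or_ne j j' with rfl | hne
    · simp [hdiag]
    · simpa [one_apply, hne] using hoff j j' hne
  have hdiff : ∑ j, ∑ j', x j * x j' * G j j' - ∑ j, x j ^ 2
      = ∑ j, ∑ j', x j * x j' * (G j j' - (1 : Matrix ι ι ℝ) j j') := by
    simp [one_apply, mul_sub, sum_sub_distrib, sq]
  have hbound : ∑ j, ∑ j', |x j| * |x j'| * (μ * (1 - (1 : Matrix ι ι ℝ) j j'))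
      = μ * ((∑ j, |x j|) ^ 2 - ∑ j, x j ^ 2) := by
    simp [one_apply, mul_sub, sum_sub_distrib, sq, mul_sum, mul_comm]
  rw [hdiff, ← hbound]
  refine (abs_sum_le_sum_abs _ _).trans (sum_le_sum fun j _ => ?_)
  refine (abs_sum_le_sum_abs _ _).trans (sum_le_sum fun j' _ => ?_)
  rw [abs_mul, abs_mul]
  exact mul_le_mul_of_nonneg_left (hentry j j') (by positivity)

end

/-- A matrix with unit-norm columns and coherence `μ` satisfies the
restricted isometry property of order `k` with constant `δ_k = (k-1)μ`. -/
theorem rip_from_coherence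
    (m M k : ℕ) (Φ : Matrix (Fin m) (Fin M) ℝ)
    (hunit : ∀ j, ∑ i, Φ i j ^ 2 = 1)
    (μ : ℝ) (hμ0 : 0 ≤ μ)
    (hμ : ∀ j j' : Fin M, j ≠ j' → |∑ i, Φ i j * Φ i j'| ≤ μ)
    (x : Fin M → ℝ)
    (hx : (Finset.univ.filter (fun j => x j ≠ 0)).card ≤ k) :
    (1 - ((k : ℝ) - 1) * μ) * (∑ j, x j ^ 2) ≤ ∑ i, (Φ.mulVec x i) ^ 2 ∧
      ∑ i, (Φ.mulVec x i) ^ 2 ≤ (1 + ((k : ℝ) - 1) * μ) * (∑ j, x j ^ 2) := by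
  have hdiag : ∀ j, (Φᵀ * Φ) j j = 1 := fun j => by simpa [mul_apply, sq] using hunit j
  have hoff : ∀ j j', j ≠ j' → |(Φᵀ * Φ) j j'| ≤ μ := fun j j' hne => by
    simpa [mul_apply] using hμ j j' hne
  have hdev := abs_le.mp (abs_quadForm_sub_sum_sq_le _ hdiag hoff x)
  have hl1 : (∑ j, |x j|) ^ 2 ≤ k * ∑ j, x j ^ 2 :=
    (sq_sum_abs_le_card_support_mul_sum_sq x).trans
      (mul_le_mul_of_nonneg_right (by exact_mod_cast hx) (by positivity))
  have hcross : μ * ((∑ j, |x j|) ^ 2 - ∑ j, x j ^ 2) ≤ ((k : ℝ) - 1) * μ * ∑ j, x j ^ 2 := by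
    nlinarith [mul_le_mul_of_nonneg_left hl1 hμ0]
  rw [sum_mulVec_sq_eq_sum_gram]
  constructor <;> linarith [hdev.1, hdev.2]
end

section
/- Let p' ≥ p'' be prime powers, t < k < p''. Given a GES(p',k,t) with entry array c' and a GES(p'',k,t) with entry array c'', define c_{m_1,…,m_{t+1},r} = c'_{i_1,…,i_{t+1},r} + p'·(c''_{j_1,…,j_{t+1},r} − 1) where m_s = i_s + p'(j_s − 1). Then c is a GES(p'p'',k,t): entries lie in {0,…,p'p''−1}, tuples whose (t+1)-dimensional indices differ in one coordinate agree in no position, and any two distinct tuples agree in at most t positions. -/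
/-- Two index tuples differ in exactly one coordinate. -/
def DiffersInOne {n t : ℕ} (i i' : Fin (t + 1) → Fin n) : Prop :=
  ∃ s, i s ≠ i' s ∧ ∀ s', s' ≠ s → i s' = i' s'

/-- A Generalized Euler Square GES(n,k,t). -/
def IsGES (n k t : ℕ) {α : Type*} [DecidableEq α]
    (A : (Fin (t + 1) → Fin n) → Fin k → α) : Prop :=
  (∀ i i', DiffersInOne i i' → ∀ r, A i r ≠ A i' r) ∧
  (∀ i i', i ≠ i' → ¬DiffersInOne i i' →
    (Finset.univ.filter (fun r => A i r = A i' r)).card ≤ t)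

/-- First component `i_s` of a combined index `m_s = i_s + p'·j_s` (0-based). -/
def fstIdx (p' p'' : ℕ) (hp' : 0 < p') (m : Fin (p' * p'')) : Fin p' :=
  ⟨(m : ℕ) % p', Nat.mod_lt _ hp'⟩

/-- Second component `j_s` of a combined index. -/
def sndIdx (p' p'' : ℕ) (hp' : 0 < p') (m : Fin (p' * p'')) : Fin p'' :=
  ⟨(m : ℕ) / p', Nat.div_lt_of_lt_mul m.isLt⟩

/-- The combined entry `c' + p'·c''` (0-based version of `c' + p'(c'' − 1)`). -/
def combineVal (p' p'' : ℕ) (a : Fin p') (b : Fin p'') : Fin (p' * p'') :=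
  ⟨(a : ℕ) + p' * (b : ℕ), by
    have ha := a.isLt
    have hb := b.isLt
    calc (a : ℕ) + p' * (b : ℕ) < p' + p' * (b : ℕ) := by omega
      _ = p' * ((b : ℕ) + 1) := by ring
      _ ≤ p' * p'' := Nat.mul_le_mul_left _ hb⟩

/-!
A combined index m is the pair (m mod p', m div p'), so distinct index tuples differ in their
first or in their second component tuple, and `c' + p'·c''` determines both `c'` and `c''`.
Hence every agreement of the composed square is an agreement of `c'` (or of `c''`) between
distinct tuples, and the factor's bounds apply. A component tuple that changes at all between
tuples differing in one coordinate also differs in just that coordinate.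
-/

open Function

theorem DiffersInOne.ne {n t : ℕ} {i i' : Fin (t + 1) → Fin n} (h : DiffersInOne i i') :
    i ≠ i' := by
  obtain ⟨s, hs, -⟩ := h
  exact fun hii' => hs (congrFun hii' s)

theorem DiffersInOne.comp {n n₁ t : ℕ} {i i' : Fin (t + 1) → Fin n} (h : DiffersInOne i i')
    {f : Fin n → Fin n₁} (hf : f ∘ i ≠ f ∘ i') : DiffersInOne (f ∘ i) (f ∘ i') := by
  obtain ⟨s, -, hother⟩ := h
  have agree : ∀ s', s' ≠ s → (f ∘ i) s' = (f ∘ i') s' := fun s' hs' => by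
    simp only [comp_apply, hother s' hs']
  refine ⟨s, fun hfs => hf (funext fun s' => ?_), agree⟩
  by_cases hs' : s' = s
  · subst hs'; exact hfs
  · exact agree s' hs'

theorem IsGES.card_agree_le {n k t : ℕ} {α : Type*} [DecidableEq α]
    {A : (Fin (t + 1) → Fin n) → Fin k → α} (hA : IsGES n k t A) {i i' : Fin (t + 1) → Fin n}
    (hne : i ≠ i') : (Finset.univ.filter fun r => A i r = A i' r).card ≤ t := by
  by_cases hd : DiffersInOne i i'
  · rw [Finset.filter_false_of_mem fun r _ => hA.1 i i' hd r, Finset.card_empty]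
    exact t.zero_le
  · exact hA.2 i i' hne hd

theorem comp_ne_or_comp_ne_of_injective_pair {ι κ β γ : Type*} {f : κ → β} {g : κ → γ}
    (hfg : Injective fun m => (f m, g m)) {i i' : ι → κ} (h : i ≠ i') :
    f ∘ i ≠ f ∘ i' ∨ g ∘ i ≠ g ∘ i' := by
  by_contra! hcomp
  exact h (funext fun s =>
    hfg (Prod.ext (congrFun hcomp.1 s) (congrFun hcomp.2 s)))

theorem IsGES.compose {n n₁ n₂ k t : ℕ} {α β γ : Type*} [DecidableEq α] [DecidableEq β]
    [DecidableEq γ] {f : Fin n → Fin n₁} {g : Fin n → Fin n₂}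
    (hfg : Injective fun m => (f m, g m)) {comb : α → β → γ} (hcomb : Injective2 comb)
    {A : (Fin (t + 1) → Fin n₁) → Fin k → α} (hA : IsGES n₁ k t A)
    {B : (Fin (t + 1) → Fin n₂) → Fin k → β} (hB : IsGES n₂ k t B) :
    IsGES n k t fun i r => comb (A (f ∘ i) r) (B (g ∘ i) r) := by
  constructor
  · intro i i' hd r heq
    obtain ⟨hAr, hBr⟩ := hcomb heq
    rcases comp_ne_or_comp_ne_of_injective_pair hfg hd.ne with hf | hg
    · exact hA.1 _ _ (hd.comp hf) r hAr
    · exact hB.1 _ _ (hd.comp hg) r hBr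
  · intro i i' hne _
    rcases comp_ne_or_comp_ne_of_injective_pair hfg hne with hf | hg
    · refine le_trans (Finset.card_le_card ?_) (hA.card_agree_le hf)
      exact Finset.monotone_filter_right _ fun r _ hr => (hcomb hr).1
    · refine le_trans (Finset.card_le_card ?_) (hB.card_agree_le hg)
      exact Finset.monotone_filter_right _ fun r _ hr => (hcomb hr).2

theorem injective2_combineVal (p' p'' : ℕ) : Injective2 (combineVal p' p'') := by
  intro a a' b b' h
  have hval : (a : ℕ) + p' * b = a' + p' * b' := congrArg Fin.val h
  have hp' : 0 < p' := a.pos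
  have hmod := congrArg (· % p') hval
  have hdiv := congrArg (· / p') hval
  simp only [Nat.add_mul_mod_self_left, Nat.mod_eq_of_lt a.isLt, Nat.mod_eq_of_lt a'.isLt] at hmod
  simp only [Nat.add_mul_div_left _ _ hp', Nat.div_eq_of_lt a.isLt,
    Nat.div_eq_of_lt a'.isLt, zero_add] at hdiv
  exact ⟨Fin.ext hmod, Fin.ext hdiv⟩

theorem injective_fstIdx_sndIdx (p' p'' : ℕ) (hp' : 0 < p') :
    Injective fun m => (fstIdx p' p'' hp' m, sndIdx p' p'' hp' m) := by
  intro m m' h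
  obtain ⟨hmod, hdiv⟩ := Prod.mk.inj h
  have hmod' : (m : ℕ) % p' = m' % p' := congrArg Fin.val hmod
  have hdiv' : (m : ℕ) / p' = m' / p' := congrArg Fin.val hdiv
  apply Fin.ext
  calc (m : ℕ) = p' * (m / p') + m % p' := (Nat.div_add_mod _ _).symm
    _ = p' * (m' / p') + m' % p' := by rw [hmod', hdiv']
    _ = m' := Nat.div_add_mod _ _

theorem ges_composition_general
    (p' p'' k t : ℕ)
    (hp'0 : 0 < p')
    (c' : (Fin (t + 1) → Fin p') → Fin k → Fin p') (hc' : IsGES p' k t c')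
    (c'' : (Fin (t + 1) → Fin p'') → Fin k → Fin p'') (hc'' : IsGES p'' k t c'') :
    IsGES (p' * p'') k t
      (fun idx r =>
        combineVal p' p''
          (c' (fun s => fstIdx p' p'' hp'0 (idx s)) r)
          (c'' (fun s => sndIdx p' p'' hp'0 (idx s)) r)) :=
  IsGES.compose (injective_fstIdx_sndIdx p' p'' hp'0) (injective2_combineVal p' p'') hc' hc''

/-- composing a GES(p',k,t) and a GES(p'',k,t) via
`c = c' + p'·c''` (on combined indices `m_s = i_s + p'·j_s`) yields a GES(p'p'',k,t). -/
theorem ges_composition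
    (p' p'' k t : ℕ) (hp' : IsPrimePow p') (hp'' : IsPrimePow p'')
    (hp'0 : 0 < p') (hle : p'' ≤ p') (ht : t < k) (hk : k < p'')
    (c' : (Fin (t + 1) → Fin p') → Fin k → Fin p') (hc' : IsGES p' k t c')
    (c'' : (Fin (t + 1) → Fin p'') → Fin k → Fin p'') (hc'' : IsGES p'' k t c'') :
    IsGES (p' * p'') k t
      (fun idx r =>
        combineVal p' p''
          (c' (fun s => fstIdx p' p'' hp'0 (idx s)) r)
          (c'' (fun s => sndIdx p' p'' hp'0 (idx s)) r)) :=
  ges_composition_general p' p'' k t hp'0 c' hc' c'' hc''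
end

section
/- Let p be prime power, k = p−1, and d | p with d ≤ p−1. The normalized Euler-square matrix (1/√k)Φ(p,k,1) of size pk × p², partitioned into p²/d orthonormal column blocks of width d (each block consisting of d columns from the same column of the Euler square array), has block coherence exactly 1/k: for blocks ℓ ≠ q from the same array column the cross-Gram is zero; from the same array row it is (1/k)(J − I) with top eigenvalue (d−1)/k; otherwise it is (1/k)J with top eigenvalue d/k; hence μ_B = (1/d)·max singular value over cross blocks = 1/k. -/
/-- Indicator column in `{0,1}^(p·k)` of a `k`-tuple with entries in `Fin p`:
the entry at row `l·p + tup l` of the `l`-th block equals 1. -/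
def indicCol (p k : ℕ) (tup : Fin k → Fin p) : Fin (p * k) → ℝ :=
  fun idx =>
    ((Finset.univ.filter
      (fun l : Fin k => (idx : ℕ) = (l : ℕ) * p + ((tup l : ℕ)))).card : ℝ)

/-- The row of the Euler square array used for column `j` of group `g`
(groups of `d` consecutive rows, `d ∣ p`). -/
def rowIdx (p d : ℕ) (hdvd : d ∣ p) (g : Fin (p / d)) (j : Fin d) : Fin p :=
  ⟨(g : ℕ) * d + (j : ℕ), by
    have hg := g.isLt
    have hj := j.isLt
    calc (g : ℕ) * d + (j : ℕ) < (g : ℕ) * d + d := by omega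
      _ = ((g : ℕ) + 1) * d := by ring
      _ ≤ (p / d) * d := Nat.mul_le_mul_right d hg
      _ = p := Nat.div_mul_cancel hdvd⟩

/-- Column of the Euler-square matrix indexed by (array column `c`, group `g`,
position `j` within the group). -/
def esCol (p d k : ℕ) (hdvd : d ∣ p) (T : Fin p → Fin p → Fin k → Fin p)
    (c : Fin p) (g : Fin (p / d)) (j : Fin d) : Fin (p * k) → ℝ :=
  indicCol p k (T (rowIdx p d hdvd g j) c)

/-- Cross-Gram matrix `(1/k)·Φ[b]ᵀΦ[b']` between two width-`d` column blocks
`b = (c, g)` and `b' = (c', g')` of the normalized Euler-square matrix. -/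
noncomputable def esGram (p d k : ℕ) (hdvd : d ∣ p) (T : Fin p → Fin p → Fin k → Fin p)
    (b b' : Fin p × Fin (p / d)) : Matrix (Fin d) (Fin d) ℝ :=
  Matrix.of fun j j' =>
    (1 / (k : ℝ)) *
      ∑ idx, esCol p d k hdvd T b.1 b.2 j idx * esCol p d k hdvd T b'.1 b'.2 j' idx

/-!
Entry `(j, j')` of the cross-Gram of two blocks is `1/k` times the number of coordinates in
which the two underlying tuples agree, because indicator columns have exactly that inner
product. The Euler-square axioms make this number `k`, `0` or `1` according as the two cells
of the array coincide, share exactly one of row and column, or share neither; this gives the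
four block formulas. In particular every entry of a cross-Gram lies in `[0, 1/k]`, so by
Cauchy–Schwarz its operator norm is at most `d/k`, and the all-ones vector attains `d/k`
for blocks from different columns and groups.
-/

open Finset Matrix

/-- The axioms of the Euler square `ES(p, p-1)`. -/
structure IsEulerSquare {R C ι α : Type*} (T : R → C → ι → α) : Prop where
  row_disjoint : ∀ r c c', c ≠ c' → ∀ i, T r c i ≠ T r c' i
  col_disjoint : ∀ r r' c, r ≠ r' → ∀ i, T r c i ≠ T r' c i
  cross_unique : ∀ r r' c c', r ≠ r' → c ≠ c' → ∃! i, T r c i = T r' c' i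

theorem IsEulerSquare.card_agree {R C ι α : Type*} [Fintype ι] [DecidableEq R] [DecidableEq C]
    [DecidableEq α] {T : R → C → ι → α} (hT : IsEulerSquare T) (r r' : R) (c c' : C) :
    #{i | T r c i = T r' c' i} =
      if r = r' then (if c = c' then Fintype.card ι else 0) else (if c = c' then 0 else 1) := by
  split_ifs with hr hc hc
  · simp [hr, hc]
  · subst hr; simpa using hT.row_disjoint r c c' hc
  · subst hc; simpa using hT.col_disjoint r r' c hr
  · exact (Fintype.existsUnique_iff_card_one _).1 (hT.cross_unique r r' c c' hr hc)

theorem Matrix.sqrt_sum_sq_mulVec_le {n : Type*} [Fintype n] (A : Matrix n n ℝ) {a : ℝ}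
    (hA : ∀ i j, |A i j| ≤ a) (x : n → ℝ) :
    √(∑ i, (A *ᵥ x) i ^ 2) ≤ (Fintype.card n * a) * √(∑ j, x j ^ 2) := by
  have ha : 0 ≤ Fintype.card n * a := by
    rcases isEmpty_or_nonempty n with hn | ⟨⟨i⟩⟩
    · simp
    · exact mul_nonneg (Nat.cast_nonneg _) ((abs_nonneg _).trans (hA i i))
  have hentry : ∀ i, |(A *ᵥ x) i| ≤ a * ∑ j, |x j| := fun i => calc
    |(A *ᵥ x) i| ≤ ∑ j, |A i j| * |x j| := by
      simpa only [mulVec, dotProduct, abs_mul] using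
        abs_sum_le_sum_abs (fun j => A i j * x j) univ
    _ ≤ ∑ j, a * |x j| := by gcongr; exact hA _ _
    _ = a * ∑ j, |x j| := by rw [mul_sum]
  have hcs : (∑ j, |x j|) ^ 2 ≤ Fintype.card n * ∑ j, x j ^ 2 := by
    simpa only [sq_abs, card_univ] using
      sq_sum_le_card_mul_sum_sq (s := univ) (f := fun j => |x j|)
  rw [← Real.sqrt_sq ha, ← Real.sqrt_mul (sq_nonneg _)]
  gcongr
  calc ∑ i, (A *ᵥ x) i ^ 2 ≤ ∑ _i : n, (a * ∑ j, |x j|) ^ 2 :=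
        sum_le_sum fun i _ => sq_le_sq' (abs_le.1 (hentry i)).1 (abs_le.1 (hentry i)).2
    _ = Fintype.card n * a ^ 2 * (∑ j, |x j|) ^ 2 := by simp; ring
    _ ≤ Fintype.card n * a ^ 2 * (Fintype.card n * ∑ j, x j ^ 2) := by gcongr
    _ = (Fintype.card n * a) ^ 2 * ∑ j, x j ^ 2 := by ring

def blockRow (p k : ℕ) : Fin k × Fin p ≃ Fin (p * k) :=
  finProdFinEquiv.trans (finCongr (Nat.mul_comm k p))

lemma blockRow_val (p k : ℕ) (x : Fin k × Fin p) : (blockRow p k x : ℕ) = x.1 * p + x.2 := by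
  simp [blockRow]; ring

lemma indicCol_blockRow (p k : ℕ) (t : Fin k → Fin p) (l : Fin k) (r : Fin p) :
    indicCol p k t (blockRow p k (l, r)) = if t l = r then 1 else 0 := by
  have hrow : ∀ l' : Fin k,
      (blockRow p k (l, r) : ℕ) = l' * p + t l' ↔ l' = l ∧ t l = r := by
    intro l'
    rw [← blockRow_val p k (l', t l'), Fin.val_inj, (blockRow p k).injective.eq_iff]
    aesop
  simp only [indicCol, hrow]
  split_ifs with h <;> simp [h, filter_eq']

lemma sum_indicCol_mul_indicCol (p k : ℕ) (t t' : Fin k → Fin p) :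
    ∑ idx, indicCol p k t idx * indicCol p k t' idx = #{i | t i = t' i} := by
  rw [← (blockRow p k).sum_comp, Fintype.sum_prod_type]
  simp [indicCol_blockRow, sum_boole]

lemma rowIdx_eq_finProdFinEquiv (p d : ℕ) (hdvd : d ∣ p) (g : Fin (p / d)) (j : Fin d) :
    rowIdx p d hdvd g j = finCongr (Nat.div_mul_cancel hdvd) (finProdFinEquiv (g, j)) := by
  ext; simp [rowIdx]; ring

lemma rowIdx_inj (p d : ℕ) (hdvd : d ∣ p) {g g' : Fin (p / d)} {j j' : Fin d} :
    rowIdx p d hdvd g j = rowIdx p d hdvd g' j' ↔ g = g' ∧ j = j' := by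
  simp [rowIdx_eq_finProdFinEquiv]

lemma esGram_apply (p d k : ℕ) (hdvd : d ∣ p) (T : Fin p → Fin p → Fin k → Fin p)
    (b b' : Fin p × Fin (p / d)) (j j' : Fin d) :
    esGram p d k hdvd T b b' j j' = (1 / (k : ℝ)) *
      #{i | T (rowIdx p d hdvd b.2 j) b.1 i = T (rowIdx p d hdvd b'.2 j') b'.1 i} := by
  simp only [esGram, esCol, of_apply, sum_indicCol_mul_indicCol]

lemma esGram_apply_of_isEulerSquare (p d k : ℕ) (hdvd : d ∣ p) (hk : k ≠ 0)
    (T : Fin p → Fin p → Fin k → Fin p) (hT : IsEulerSquare T)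
    (c c' : Fin p) (g g' : Fin (p / d)) (j j' : Fin d) :
    esGram p d k hdvd T (c, g) (c', g') j j' =
      if g = g' ∧ j = j' then (if c = c' then 1 else 0)
      else (if c = c' then 0 else 1 / (k : ℝ)) := by
  simp only [esGram_apply, hT.card_agree, rowIdx_inj]
  split_ifs <;> simp [hk]

lemma abs_esGram_apply_le (p d k : ℕ) (hdvd : d ∣ p) (hk : k ≠ 0)
    (T : Fin p → Fin p → Fin k → Fin p) (hT : IsEulerSquare T)
    {b b' : Fin p × Fin (p / d)} (hb : b ≠ b') (j j' : Fin d) :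
    |esGram p d k hdvd T b b' j j'| ≤ 1 / (k : ℝ) := by
  obtain ⟨c, g⟩ := b
  obtain ⟨c', g'⟩ := b'
  rw [esGram_apply_of_isEulerSquare p d k hdvd hk T hT]
  split_ifs <;> simp_all

/-- For `p` a prime power, `k = p − 1`, `d ∣ p`, `d ≤ p − 1`, the
normalized Euler-square matrix `(1/√k)Φ(p,k,1)` (of size `pk × p²`), partitioned into
`p²/d` column blocks of width `d` (each block taking `d` consecutive tuples from one
column of the Euler-square array `T`), has block coherence exactly `1/k`: each block is
orthonormal, cross-Grams of blocks from the same array column vanish, from the same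
group of rows they equal `(1/k)(J − I)` (top eigenvalue `(d−1)/k`), otherwise `(1/k)J`
(top eigenvalue `d/k`); hence `(1/d)·max σ_max = (1/d)(d/k) = 1/k`. -/
theorem euler_square_matrix_block_coherence
    (p d k : ℕ) (hp : IsPrimePow p) (hdvd : d ∣ p) (hd : d ≤ p - 1) (hk : k = p - 1)
    (T : Fin p → Fin p → Fin k → Fin p)
    (hrow : ∀ r c c', c ≠ c' → ∀ i, T r c i ≠ T r c' i)
    (hcol : ∀ r r' c, r ≠ r' → ∀ i, T r c i ≠ T r' c i)
    (hcross : ∀ r r' c c', r ≠ r' → c ≠ c' → ∃! i, T r c i = T r' c' i) :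
    -- each block is orthonormal
    (∀ b : Fin p × Fin (p / d), esGram p d k hdvd T b b = 1) ∧
    -- same array column, different groups: cross-Gram is zero
    (∀ (c : Fin p) (g g' : Fin (p / d)), g ≠ g' →
      esGram p d k hdvd T (c, g) (c, g') = 0) ∧
    -- different array columns, same group: cross-Gram is (1/k)(J − I)
    (∀ (c c' : Fin p) (g : Fin (p / d)), c ≠ c' →
      esGram p d k hdvd T (c, g) (c', g) =
        Matrix.of fun j j' => if j = j' then 0 else 1 / (k : ℝ)) ∧
    -- different array columns and groups: cross-Gram is (1/k)J
    (∀ (c c' : Fin p) (g g' : Fin (p / d)), c ≠ c' → g ≠ g' →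
      esGram p d k hdvd T (c, g) (c', g') = Matrix.of fun _ _ => 1 / (k : ℝ)) ∧
    -- every cross-Gram has largest singular value at most d/k …
    (∀ b b' : Fin p × Fin (p / d), b ≠ b' → ∀ x : Fin d → ℝ,
      Real.sqrt (∑ j, ((esGram p d k hdvd T b b').mulVec x j) ^ 2) ≤
        ((d : ℝ) / k) * Real.sqrt (∑ j, x j ^ 2)) ∧
    -- … and the value d/k is attained, so the block coherence equals (1/d)(d/k) = 1/k
    (∃ b b' : Fin p × Fin (p / d), b ≠ b' ∧ ∃ x : Fin d → ℝ, x ≠ 0 ∧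
      (esGram p d k hdvd T b b').mulVec x = ((d : ℝ) / k) • x) := by
  have hp2 := hp.two_le
  have hk0 : k ≠ 0 := by omega
  have hd0 : 0 < d := Nat.pos_of_dvd_of_pos hdvd (by omega)
  have hgroups : 1 < p / d := by rw [Nat.lt_div_iff_mul_lt' hdvd]; omega
  have hT : IsEulerSquare T := ⟨hrow, hcol, hcross⟩
  have hG := esGram_apply_of_isEulerSquare p d k hdvd hk0 T hT
  refine ⟨fun ⟨c, g⟩ => ?_, fun c g g' hg => ?_, fun c c' g hc => ?_,
    fun c c' g g' hc hg => ?_, fun b b' hb x => ?_, ?_⟩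
  · ext j j'; simp [hG, one_apply]
  · ext j j'; simp [hG, hg]
  · ext j j'; simp [hG, hc]
  · ext j j'; simp [hG, hc, hg]
  · simpa [div_eq_mul_inv] using
      sqrt_sum_sq_mulVec_le _ (abs_esGram_apply_le p d k hdvd hk0 T hT hb) x
  · refine ⟨(⟨0, by omega⟩, ⟨0, by omega⟩), (⟨1, by omega⟩, ⟨1, hgroups⟩), by simp,
      1, Function.ne_iff.2 ⟨⟨0, hd0⟩, by simp⟩, ?_⟩
    ext j
    simp [mulVec, dotProduct, hG, div_eq_mul_inv]
end
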